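/- In the setting of the proof of the blow-up bound for complete graphs: let n, k be positive integers with n·k ≥ 2 and let t = max{⌈4·log₂(n·k)⌉, 2k}. Then there exists an orientation of the complete n-partite graph K_n^(k) (each part of size k) such that every vertex-set of size t contains a directed cycle under this orientation. -/

import Mathlib

/-- An orientation of a simple graph `G`: a relation choosing exactly one
direction for each edge of `G` (and relating no non-adjacent pair). -/
def IsOrientation {V : Type*} (G : SimpleGraph V) (D : V → V → Prop) : Prop :=
  (∀ u v, D u v → G.Adj u v) ∧ ∀ u v, G.Adj u v → (D u v ↔ ¬ D v u)

/-- A set `A` of vertices is acyclic for the digraph `D` if the digraph induced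
on `A` contains no directed cycle (no vertex reaches itself by a nonempty
directed walk inside `A`). -/
def IsAcyclicOn {V : Type*} (D : V → V → Prop) (A : Set V) : Prop :=
  ∀ x ∈ A, ¬ Relation.TransGen (fun a b => a ∈ A ∧ b ∈ A ∧ D a b) x x

/-- A set `A` of vertices contains a directed cycle of the digraph `D`. -/
def HasDirCycleOn {V : Type*} (D : V → V → Prop) (A : Set V) : Prop :=
  ∃ x ∈ A, Relation.TransGen (fun a b => a ∈ A ∧ b ∈ A ∧ D a b) x x

/-- The blow-up of a simple graph `H` with power `m`: each vertex is replaced by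
an independent set of size `m`, each edge by a complete bipartite graph `K_{m,m}`. -/
def blowup {α : Type*} (H : SimpleGraph α) (m : ℕ) : SimpleGraph (α × Fin m) where
  Adj a b := H.Adj a.1 b.1
  symm := ⟨fun _ _ h => h.symm⟩
  loopless := ⟨fun a h => H.loopless.irrefl a.1 h⟩

/-! Orient the edges at random. If a `t`-set `A` is acyclic, then some enumeration of `A` has no
backward edge, and this enumeration fixes the direction of every edge inside `A`. In `K_n^(k)`
each vertex of `A` misses at most `k` vertices of `A`, so `A` spans at least `t(t-k)/2 ≥ t²/4`
edges as `t ≥ 2k`. Hence the probability that some `t`-set is acyclic is at most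
`(nk)_t · 2^(-t²/4) < (nk)^t · 2^(-t²/4) ≤ 1`, using `t ≥ 4 log₂(nk)`. -/

open Finset

lemma Finset.card_mul_pow_card_le_of_eqOn {X β : Type*} [Fintype X] [DecidableEq X] [Fintype β]
    {F : Finset (X → β)} {S : Finset X} (h : ∀ f ∈ F, ∀ g ∈ F, Set.EqOn f g S) :
    #F * Fintype.card β ^ #S ≤ Fintype.card β ^ Fintype.card X := by
  have hres : #F ≤ Fintype.card (↥(Sᶜ) → β) := by
    simpa using card_le_card_of_injOn (t := univ) (fun f (x : ↥(Sᶜ)) => f x)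
      (fun _ _ => mem_univ _) fun f hf g hg hfg => funext fun x =>
        if hx : x ∈ S then h f hf g hg hx else congrFun hfg ⟨x, mem_compl.2 hx⟩
  rw [Fintype.card_fun, Fintype.card_coe, card_compl] at hres
  calc #F * Fintype.card β ^ #S
      ≤ Fintype.card β ^ (Fintype.card X - #S) * Fintype.card β ^ #S :=
        Nat.mul_le_mul_right _ hres
    _ = Fintype.card β ^ Fintype.card X := by rw [← pow_add, Nat.sub_add_cancel (card_le_univ S)]

lemma SimpleGraph.card_mul_le_two_mul_card_edgeFinset {W : Type*} [Fintype W] [DecidableEq W]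
    (H : SimpleGraph W) [DecidableRel H.Adj] {δ : ℕ} (h : ∀ v, δ ≤ H.degree v) :
    Fintype.card W * δ ≤ 2 * #H.edgeFinset := by
  rw [← H.sum_degrees_eq_twice_card_edges, ← smul_eq_mul, ← Finset.card_univ, ← sum_const]
  exact sum_le_sum fun v _ => h v

section Acyclic

variable {V : Type*} {D : V → V → Prop}

def NoBackEdges {t : ℕ} (D : V → V → Prop) (c : Fin t → V) : Prop :=
  ∀ i j, i < j → ¬ D (c j) (c i)

lemma HasDirCycleOn.mono {A B : Set V} (h : HasDirCycleOn D A) (hAB : A ⊆ B) :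
    HasDirCycleOn D B := by
  obtain ⟨x, hx, hcyc⟩ := h
  exact ⟨x, hAB hx, Relation.TransGen.mono (fun _ _ hab => ⟨hAB hab.1, hAB hab.2.1, hab.2.2⟩)
    _ _ hcyc⟩

lemma exists_source_of_not_hasDirCycleOn {A : Finset V} (hA : A.Nonempty)
    (h : ¬ HasDirCycleOn D A) : ∃ a ∈ A, ∀ b ∈ A, ¬ D b a := by
  let step a b := a ∈ (A : Set V) ∧ b ∈ (A : Set V) ∧ D a b
  have : IsStrictOrder V (Relation.TransGen step) :=
    { irrefl := fun x hx => h ⟨x, by cases hx with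
        | single hstep => exact hstep.1
        | tail _ hstep => exact hstep.2.1, hx⟩
      trans := fun _ _ _ => Relation.TransGen.trans }
  obtain ⟨⟨a, ha⟩, -, hmin⟩ :=
    (A.wellFoundedOn (r := Relation.TransGen step)).has_min Set.univ ⟨⟨_, hA.choose_spec⟩, trivial⟩
  exact ⟨a, ha, fun b hb hba => hmin ⟨b, hb⟩ trivial (.single ⟨hb, ha, hba⟩)⟩

lemma exists_list_pairwise_of_not_hasDirCycleOn [DecidableEq V] (A : Finset V)
    (h : ¬ HasDirCycleOn D A) :
    ∃ l : List V, l.Nodup ∧ l.toFinset = A ∧ l.Pairwise fun a b => ¬ D b a := by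
  induction A using Finset.strongInduction with
  | H A ih =>
    rcases A.eq_empty_or_nonempty with rfl | hA
    · exact ⟨[], by simp⟩
    obtain ⟨a, ha, hsource⟩ := exists_source_of_not_hasDirCycleOn hA h
    obtain ⟨l, hnd, hl, hpw⟩ := ih (A.erase a) (erase_ssubset ha)
      fun h' => h (h'.mono (by simp))
    have hmem : ∀ b ∈ l, b ∈ A.erase a := fun b hb => hl ▸ List.mem_toFinset.2 hb
    refine ⟨a :: l, List.nodup_cons.2 ⟨fun hal => ?_, hnd⟩, ?_, ?_⟩
    · simpa using hmem a hal
    · simp [hl, insert_erase ha]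
    · exact .cons (fun b hb => hsource b (mem_of_mem_erase (hmem b hb))) hpw

lemma exists_embedding_noBackEdges_of_not_hasDirCycleOn [DecidableEq V] {A : Finset V}
    (h : ¬ HasDirCycleOn D A) : ∃ c : Fin #A ↪ V, NoBackEdges D c := by
  obtain ⟨l, hnd, hl, hpw⟩ := exists_list_pairwise_of_not_hasDirCycleOn A h
  have hlen : l.length = #A := by rw [← hl, List.toFinset_card_of_nodup hnd]
  exact ⟨(finCongr hlen.symm).toEmbedding.trans ⟨l.get, List.nodup_iff_injective_get.1 hnd⟩,
    fun i j hij => List.pairwise_iff_get.1 hpw _ _ hij⟩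

end Acyclic

section Orientation

variable {V : Type*} [LinearOrder V] (G : SimpleGraph V)

/-- `f e = true` orients the edge `e` from its smaller to its larger endpoint. -/
def orientBy (f : Sym2 V → Bool) (u v : V) : Prop :=
  G.Adj u v ∧ f s(u, v) = decide (u < v)

lemma isOrientation_orientBy (f : Sym2 V → Bool) : IsOrientation G (orientBy G f) := by
  refine ⟨fun u v h => h.1, fun u v huv => ?_⟩
  rw [orientBy, orientBy, Sym2.eq_swap]
  rcases lt_or_gt_of_ne huv.ne with h | h <;>
    cases f s(u, v) <;> simp [huv, huv.symm, h, h.not_gt]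

variable {G}

lemma NoBackEdges.orientBy_apply_eq_decide {t : ℕ} {f : Sym2 V → Bool} {c : Fin t → V}
    (h : NoBackEdges (orientBy G f) c) {i j : Fin t} (hij : i < j) (hadj : G.Adj (c i) (c j)) :
    f s(c i, c j) = decide (c i < c j) := by
  have hne : f s(c i, c j) ≠ decide (c j < c i) :=
    fun hf => h i j hij ⟨hadj.symm, by rwa [Sym2.eq_swap]⟩
  revert hne
  rcases lt_or_gt_of_ne hadj.ne with hc | hc <;> cases f s(c i, c j) <;> simp [hc, hc.not_gt]

lemma card_mul_le_of_forall_noBackEdges [Fintype V] [DecidableRel G.Adj] {t : ℕ}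
    (c : Fin t ↪ V) {F : Finset (Sym2 V → Bool)} (hF : ∀ f ∈ F, NoBackEdges (orientBy G f) c) :
    #F * 2 ^ #(G.comap c).edgeFinset ≤ 2 ^ Fintype.card (Sym2 V) := by
  rw [← card_map c.sym2Map]
  refine card_mul_pow_card_le_of_eqOn fun f hf g hg e he => ?_
  obtain ⟨e, hedge, rfl⟩ := mem_map.1 he
  induction e using Sym2.ind with
  | h i j =>
    have hadj : G.Adj (c i) (c j) := by simpa using hedge
    simp only [Function.Embedding.sym2Map_apply, Sym2.map_mk]
    rcases lt_trichotomy i j with hij | rfl | hji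
    · rw [(hF f hf).orientBy_apply_eq_decide hij hadj, (hF g hg).orientBy_apply_eq_decide hij hadj]
    · exact absurd hadj (G.loopless.irrefl _)
    · rw [Sym2.eq_swap, (hF f hf).orientBy_apply_eq_decide hji hadj.symm,
        (hF g hg).orientBy_apply_eq_decide hji hadj.symm]

end Orientation

theorem exists_isOrientation_forall_hasDirCycleOn {V : Type*} [Fintype V] (G : SimpleGraph V)
    [DecidableRel G.Adj] {t M : ℕ} (hM : ∀ c : Fin t ↪ V, M ≤ #(G.comap c).edgeFinset)
    (hcount : (Fintype.card V).descFactorial t < 2 ^ M) :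
    ∃ D, IsOrientation G D ∧ ∀ A : Finset V, #A = t → HasDirCycleOn D A := by
  classical
  let : LinearOrder V := LinearOrder.lift' _ (Fintype.equivFin V).injective
  by_contra! hbad
  have hcover (f : Sym2 V → Bool) : ∃ c : Fin t ↪ V, NoBackEdges (orientBy G f) c := by
    obtain ⟨A, rfl, hA⟩ := hbad _ (isOrientation_orientBy G f)
    exact exists_embedding_noBackEdges_of_not_hasDirCycleOn hA
  choose emb hemb using hcover
  have hfiber (c : Fin t ↪ V) : #{f | emb f = c} * 2 ^ M ≤ 2 ^ Fintype.card (Sym2 V) :=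
    (Nat.mul_le_mul_left _ (Nat.pow_le_pow_right two_pos (hM c))).trans
      (card_mul_le_of_forall_noBackEdges c fun f hf => (mem_filter.1 hf).2 ▸ hemb f)
  have : 2 ^ Fintype.card (Sym2 V) * 2 ^ M ≤
      (Fintype.card V).descFactorial t * 2 ^ Fintype.card (Sym2 V) :=
    calc 2 ^ Fintype.card (Sym2 V) * 2 ^ M = ∑ c, #{f | emb f = c} * 2 ^ M := by
          rw [← sum_mul, ← card_eq_sum_card_fiberwise (fun f _ => mem_univ (emb f)),
            card_univ, Fintype.card_fun, Fintype.card_bool]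
      _ ≤ ∑ _c : Fin t ↪ V, 2 ^ Fintype.card (Sym2 V) := sum_le_sum fun c _ => hfiber c
      _ = (Fintype.card V).descFactorial t * 2 ^ Fintype.card (Sym2 V) := by
          simp [Fintype.card_embedding_eq]
  have := Nat.mul_lt_mul_of_lt_of_le hcount le_rfl (pow_pos two_pos (Fintype.card (Sym2 V)))
  linarith

lemma blowup_completeGraph (n k : ℕ) :
    blowup (SimpleGraph.completeGraph (Fin n)) k = SimpleGraph.completeEquipartiteGraph n k :=
  rfl

lemma SimpleGraph.sub_le_degree_comap_completeEquipartiteGraph {n k t : ℕ}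
    (c : Fin t ↪ Fin n × Fin k) (i : Fin t) :
    t - k ≤ ((completeEquipartiteGraph n k).comap c).degree i := by
  have hpart : #{j | (c i).1 = (c j).1} ≤ k := by
    simpa using card_le_card_of_injOn (fun j => (c j).2) (fun j _ => mem_univ (c j).2)
      (t := univ) fun j hj j' hj' h => c.injective (Prod.ext (by simp_all) h)
  have hsplit := card_filter_add_card_filter_not (s := (univ : Finset (Fin t)))
    (fun j => (c i).1 = (c j).1)
  rw [← card_neighborFinset_eq_degree, neighborFinset_eq_filter]
  simp only [comap_adj, top_adj, ne_eq, card_univ, Fintype.card_fin] at hsplit ⊢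
  omega

lemma pow_four_le_two_pow_of_four_mul_logb_le {N t : ℕ} (h : 4 * Real.logb 2 N ≤ t) :
    N ^ 4 ≤ 2 ^ t := by
  rcases N.eq_zero_or_pos with rfl | hN
  · simp
  have hlog : Real.logb 2 ((N : ℝ) ^ 4) ≤ t := by rw [Real.logb_pow]; push_cast; linarith
  rw [Real.logb_le_iff_le_rpow one_lt_two (by positivity), Real.rpow_natCast] at hlog
  exact_mod_cast hlog

lemma descFactorial_lt_two_pow {N t M : ℕ} (hN : N ^ 4 ≤ 2 ^ t) (ht : 2 ≤ t)
    (hM : t * t ≤ 4 * M) : N.descFactorial t < 2 ^ M := by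
  rcases N.eq_zero_or_pos with rfl | hN0
  · rw [Nat.descFactorial_eq_zero_iff_lt.2 (by omega)]
    positivity
  refine lt_of_pow_lt_pow_left₀ 4 (by positivity) ?_
  calc N.descFactorial t ^ 4 < (N ^ t) ^ 4 :=
        pow_lt_pow_left₀ (Nat.descFactorial_lt_pow hN0.ne' ht) (Nat.zero_le _) (by norm_num)
    _ = (N ^ 4) ^ t := by ring
    _ ≤ (2 ^ t) ^ t := Nat.pow_le_pow_left hN t
    _ = 2 ^ (t * t) := (pow_mul 2 t t).symm
    _ ≤ 2 ^ (4 * M) := Nat.pow_le_pow_right two_pos hM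
    _ = (2 ^ M) ^ 4 := by ring

theorem exists_orientation_blowup_complete_cyclic_general (n k : ℕ) (hk : 0 < k) :
    ∃ D : (Fin n × Fin k) → (Fin n × Fin k) → Prop,
      IsOrientation (blowup (SimpleGraph.completeGraph (Fin n)) k) D ∧
      ∀ A : Finset (Fin n × Fin k),
        A.card = max ⌈4 * Real.logb 2 ((n * k : ℕ) : ℝ)⌉₊ (2 * k) →
        HasDirCycleOn D (A : Set (Fin n × Fin k)) := by
  set t := max ⌈4 * Real.logb 2 ((n * k : ℕ) : ℝ)⌉₊ (2 * k)
  have h2k : 2 * k ≤ t := le_max_right _ _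
  have hpow : (n * k) ^ 4 ≤ 2 ^ t :=
    pow_four_le_two_pow_of_four_mul_logb_le (Nat.ceil_le.1 (le_max_left _ _))
  have htt : t * t ≤ 2 * (t * (t - k)) :=
    calc t * t ≤ t * (2 * (t - k)) := Nat.mul_le_mul_left t (by omega)
      _ = 2 * (t * (t - k)) := by ring
  rw [blowup_completeGraph]
  refine exists_isOrientation_forall_hasDirCycleOn _ (M := (t * (t - k) + 1) / 2)
    (fun c => ?_) ?_
  · have := SimpleGraph.card_mul_le_two_mul_card_edgeFinset _
      (SimpleGraph.sub_le_degree_comap_completeEquipartiteGraph c)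
    simp only [Fintype.card_fin] at this
    omega
  · simpa using descFactorial_lt_two_pow hpow (by omega) (by omega)

/-- There is an orientation of the complete `n`-partite graph `K_n^(k)` (the
blow-up of `K_n` with power `k`) such that every vertex-set of size
`t = max{⌈4 log₂(nk)⌉, 2k}` contains a directed cycle. -/
theorem exists_orientation_blowup_complete_cyclic (n k : ℕ) (hn : 0 < n)
    (hk : 0 < k) (hnk : 2 ≤ n * k) :
    ∃ D : (Fin n × Fin k) → (Fin n × Fin k) → Prop,
      IsOrientation (blowup (SimpleGraph.completeGraph (Fin n)) k) D ∧
      ∀ A : Finset (Fin n × Fin k),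
        A.card = max ⌈4 * Real.logb 2 ((n * k : ℕ) : ℝ)⌉₊ (2 * k) →
        HasDirCycleOn D (A : Set (Fin n × Fin k)) :=
  exists_orientation_blowup_complete_cyclic_general n k hk
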